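/- Let θ, θ̂ ∈ R^d with θ ≠ 0 ≠ θ̂, let A ⊆ R^d be the unit sphere S^{d−1}, let x* = θ/‖θ‖ (the maximizer of ⟨x,θ⟩ over A) and x̂ = θ̂/‖θ̂‖ (the maximizer of ⟨x,θ̂⟩ over A). Then ⟨x*, θ⟩ − ⟨x̂, θ⟩ ≤ 2 ‖θ − θ̂‖² / ‖θ‖. -/

import Mathlib

/-!
Write `x = θ / ‖θ‖` and `u = θ̂ / ‖θ̂‖`. Because the sphere is curved, the regret
`⟪x - u, θ⟫` is quadratic in the distance of the two unit vectors: it equals `‖θ‖ ‖x - u‖² / 2`.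
Because `u` maximizes `⟪·, θ̂⟫`, the regret is also at most `⟪x - u, θ - θ̂⟫ ≤ ‖x - u‖ ‖θ - θ̂‖`.
Comparing the two gives `‖x - u‖ ≤ 2 ‖θ - θ̂‖ / ‖θ‖`, and hence the bound.
-/

open scoped RealInnerProductSpace

section

variable {E : Type*} [NormedAddCommGroup E] [InnerProductSpace ℝ E]

theorem real_inner_le_inner_inv_norm_smul_self {x : E} (θ : E) (hx : ‖x‖ ≤ 1) :
    ⟪x, θ⟫ ≤ ⟪‖θ‖⁻¹ • θ, θ⟫ := by
  rcases eq_or_ne θ 0 with rfl | hθ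
  · simp
  have hθpos : 0 < ‖θ‖ := norm_pos_iff.2 hθ
  calc ⟪x, θ⟫ ≤ ‖x‖ * ‖θ‖ := real_inner_le_norm x θ
    _ ≤ ‖θ‖ := mul_le_of_le_one_left hθpos.le hx
    _ = ⟪‖θ‖⁻¹ • θ, θ⟫ := by
      rw [real_inner_smul_left, real_inner_self_eq_norm_sq]
      field_simp

theorem real_inner_sub_le_norm_mul_norm_sub_of_inner_le {x u θ θ' : E}
    (hu : ⟪x, θ'⟫ ≤ ⟪u, θ'⟫) : ⟪x - u, θ⟫ ≤ ‖x - u‖ * ‖θ - θ'‖ :=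
  calc ⟪x - u, θ⟫ = ⟪x - u, θ - θ'⟫ + (⟪x, θ'⟫ - ⟪u, θ'⟫) := by
        rw [inner_sub_right, inner_sub_left x u θ']
        ring
    _ ≤ ⟪x - u, θ - θ'⟫ := by linarith
    _ ≤ ‖x - u‖ * ‖θ - θ'‖ := real_inner_le_norm _ _

theorem real_inner_sub_smul_self_eq_of_norm_eq_one {x u : E} (hx : ‖x‖ = 1) (hu : ‖u‖ = 1)
    (r : ℝ) : ⟪x - u, r • x⟫ = r / 2 * ‖x - u‖ ^ 2 := by
  rw [norm_sub_sq_real, hx, hu, inner_smul_right, inner_sub_left, real_inner_self_eq_norm_sq, hx,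
    real_inner_comm]
  ring

theorem real_inner_sub_smul_self_le_of_norm_eq_one {x u θ' : E} (hx : ‖x‖ = 1) (hu : ‖u‖ = 1)
    {r : ℝ} (hr : 0 < r) (hmax : ⟪x, θ'⟫ ≤ ⟪u, θ'⟫) :
    ⟪x - u, r • x⟫ ≤ 2 * ‖r • x - θ'‖ ^ 2 / r := by
  set a := ‖x - u‖
  set b := ‖r • x - θ'‖
  have hquad : ⟪x - u, r • x⟫ = r / 2 * a ^ 2 :=
    real_inner_sub_smul_self_eq_of_norm_eq_one hx hu r
  have hlin : r / 2 * a ^ 2 ≤ a * b :=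
    hquad ▸ real_inner_sub_le_norm_mul_norm_sub_of_inner_le hmax
  have ha : 0 ≤ a := norm_nonneg _
  have hab : r * a ≤ 2 * b := by
    rcases ha.eq_or_lt with ha0 | hapos
    · rw [← ha0, mul_zero]
      positivity
    · nlinarith
  rw [hquad, le_div_iff₀ hr]
  nlinarith [mul_nonneg hr.le ha]

end

theorem stmt_17 {d : ℕ} (θ θhat : EuclideanSpace ℝ (Fin d))
    (hθ : θ ≠ 0) (hθhat : θhat ≠ 0) :
    ⟪(‖θ‖⁻¹ • θ), θ⟫ - ⟪(‖θhat‖⁻¹ • θhat), θ⟫ ≤ 2 * ‖θ - θhat‖ ^ 2 / ‖θ‖ := by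
  have hx : ‖‖θ‖⁻¹ • θ‖ = 1 := norm_smul_inv_norm hθ
  have hu : ‖‖θhat‖⁻¹ • θhat‖ = 1 := norm_smul_inv_norm hθhat
  have hθx : ‖θ‖ • ‖θ‖⁻¹ • θ = θ := smul_inv_smul₀ (norm_ne_zero_iff.2 hθ) θ
  have hregret := real_inner_sub_smul_self_le_of_norm_eq_one hx hu (norm_pos_iff.2 hθ)
    (real_inner_le_inner_inv_norm_smul_self θhat hx.le)
  rwa [hθx, inner_sub_left] at hregret
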